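/- For n ≥ 2, the map ψ: (a,b,k) ↦ Add(T⁰_{n-1}; a,b,k) is a poset isomorphism from Φ_n = {(a,b,k) ∈ ℙ³ : 1 ≤ k ≤ b ≤ n-1-a} with order (a,b,k) ≤ (a',b',k') iff a ≥ a', b ≥ b', k ≤ k', onto the poset Q_n of join-irreducibles of M_n. -/

import Mathlib

/-- The cells of the Young diagram with row lengths `lam`: `(a,b)` with
`a,b ≥ 1` and `b ≤ lam a` (rows and columns are 1-indexed). -/
def CellOf (lam : ℕ → ℕ) (a b : ℕ) : Prop := 1 ≤ a ∧ 1 ≤ b ∧ b ≤ lam a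

instance (lam : ℕ → ℕ) (a b : ℕ) : Decidable (CellOf lam a b) :=
  inferInstanceAs (Decidable (1 ≤ a ∧ 1 ≤ b ∧ b ≤ lam a))

/-- Extension of a tableau by the boundary conventions `T_{a,0} = a`, `T_{0,b} = 0`. -/
def ExtT (T : ℕ → ℕ → ℕ) (a b : ℕ) : ℕ :=
  if b = 0 then a else if a = 0 then 0 else T a b

/-- `T` is a semistandard Young tableau of shape `lam` (1-indexed, with positive
entries, equal to `0` outside the shape): rows are weakly increasing and columns
strictly increasing, expressed with the conventions `T_{a,0} = a`, `T_{0,b} = 0`. -/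
def IsSSYTShape (lam : ℕ → ℕ) (T : ℕ → ℕ → ℕ) : Prop :=
  (∀ a b, ¬ CellOf lam a b → T a b = 0) ∧
  (∀ a b, CellOf lam a b → ExtT T a (b - 1) ≤ ExtT T a b) ∧
  (∀ a b, CellOf lam a b → ExtT T (a - 1) b < ExtT T a b)

/-- Row lengths of the staircase shape `δ_{n-1} = (n-2, n-3, …, 1)`:
row `a` has `n-1-a` cells. -/
def staircase (n : ℕ) : ℕ → ℕ := fun a => n - 1 - a

/-- Membership in `M_n`: SSYT of shape `δ_{n-1}` with all entries at most `n-1`. -/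
def MnMem (n : ℕ) (T : ℕ → ℕ → ℕ) : Prop :=
  IsSSYTShape (staircase n) T ∧ ∀ a b, T a b ≤ n - 1

/-- The entry of `T` at `(a,b)` is reducible: `T_{a,b} - T_{a,b-1} ≥ 1` and
`T_{a,b} - T_{a-1,b} ≥ 2`, with the conventions `T_{a,0} = a`, `T_{0,b} = 0`. -/
def Reducible (T : ℕ → ℕ → ℕ) (a b : ℕ) : Prop :=
  ExtT T a (b - 1) + 1 ≤ ExtT T a b ∧ ExtT T (a - 1) b + 2 ≤ ExtT T a b

/-- The minimal SSYT of shape `lam`, whose `(a,b)`-entry is `a`. -/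
def minT (lam : ℕ → ℕ) : ℕ → ℕ → ℕ := fun a b => if CellOf lam a b then a else 0

/-- `AddT lam T a b k` adds `k` to every entry of `T` in a cell `(x,y)` of `lam`
with `x ≥ a` and `y ≥ b`. -/
def AddT (lam : ℕ → ℕ) (T : ℕ → ℕ → ℕ) (a b k : ℕ) : ℕ → ℕ → ℕ :=
  fun x y => if CellOf lam x y ∧ a ≤ x ∧ b ≤ y then T x y + k else T x y

/-- `S` is covered by `T` in `M_n` (entrywise order). -/
def MnCovBy (n : ℕ) (S T : ℕ → ℕ → ℕ) : Prop :=
  MnMem n S ∧ S < T ∧ ∀ U, MnMem n U → ¬(S < U ∧ U < T)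

/-- `T` is a join-irreducible of `M_n`. -/
def MnJoinIrred (n : ℕ) (T : ℕ → ℕ → ℕ) : Prop :=
  MnMem n T ∧ ∃! S, MnCovBy n S T

/-- The set `Φ_n = {(a,b,k) ∈ ℙ³ : 1 ≤ k ≤ b ≤ n-1-a}`. -/
def PhiSet (n : ℕ) : Set (ℕ × ℕ × ℕ) :=
  {x | 1 ≤ x.1 ∧ 1 ≤ x.2.2 ∧ x.2.2 ≤ x.2.1 ∧ x.1 + x.2.1 ≤ n - 1}

/-! An entry of `T ∈ M_n` can be lowered by one without leaving `M_n` exactly when it is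
reducible, and for `S < T` in `M_n` the minimal cell where `S` and `T` differ is reducible
in `T` and `S` lies below `T` lowered there. So the lower covers of `T` are its lowerings at
reducible cells, and `T` is join-irreducible iff it has exactly one reducible cell.
A non-reducible entry equals `max (T_{a,b-1}) (T_{a-1,b} + 1)`, so a tableau is determined by
its reducible cells and their entries; `Add(T⁰; a,b,k)` with `k ≥ 1` has `(a,b)` as its only
reducible cell, which gives the bijection. The bound `n - 1` in the bottom cell of column `b`
is what forces `k ≤ b`. -/

def lowerAt (T : ℕ → ℕ → ℕ) (c d : ℕ) : ℕ → ℕ → ℕ :=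
  fun u v => if u = c ∧ v = d then T u v - 1 else T u v

section Tableau

variable {lam : ℕ → ℕ} {S T : ℕ → ℕ → ℕ} {a b c d k u v : ℕ}

lemma extT_of_pos (hu : 1 ≤ u) (hv : 1 ≤ v) : ExtT T u v = T u v := by
  simp only [ExtT, if_neg (show v ≠ 0 by omega), if_neg (show u ≠ 0 by omega)]

lemma extT_lowerAt (hc : 1 ≤ c) (hd : 1 ≤ d) :
    ExtT (lowerAt T c d) u v = if u = c ∧ v = d then ExtT T u v - 1 else ExtT T u v := by
  unfold ExtT lowerAt
  split_ifs <;> omega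

lemma IsSSYTShape.cellOf_of_reducible (hT : IsSSYTShape lam T) (h : Reducible T c d) :
    CellOf lam c d := by
  obtain ⟨h1, h2⟩ := h
  have hd : 1 ≤ d := by by_contra hd; simp [ExtT, show d = 0 by omega] at h1
  have hc : 1 ≤ c := by by_contra hc; simp [ExtT, show c = 0 by omega] at h2
  by_contra hcell
  rw [extT_of_pos hc hd, hT.1 c d hcell] at h2
  omega

lemma IsSSYTShape.two_le_of_reducible (hT : IsSSYTShape lam T) (h : Reducible T c d) :
    2 ≤ T c d := by
  obtain ⟨hc, hd, -⟩ := hT.cellOf_of_reducible h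
  have := h.2
  rw [extT_of_pos hc hd] at this
  omega

lemma IsSSYTShape.lowerAt_of_reducible (hT : IsSSYTShape lam T) (h : Reducible T c d) :
    IsSSYTShape lam (lowerAt T c d) := by
  have hcd := hT.cellOf_of_reducible h
  obtain ⟨hc, hd, -⟩ := id hcd
  obtain ⟨hred_row, hred_col⟩ := h
  refine ⟨fun u v hcell => ?_, fun u v hcell => ?_, fun u v hcell => ?_⟩
  · rw [lowerAt, if_neg (by rintro ⟨rfl, rfl⟩; exact hcell hcd), hT.1 u v hcell]
  · have := hT.2.1 u v hcell
    simp only [extT_lowerAt hc hd]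
    split_ifs with _ hcd' hcd' <;> first | omega | (obtain ⟨rfl, rfl⟩ := hcd'; omega)
  · have := hT.2.2 u v hcell
    simp only [extT_lowerAt hc hd]
    split_ifs with _ hcd' hcd' <;> first | omega | (obtain ⟨rfl, rfl⟩ := hcd'; omega)

lemma lowerAt_covBy (h : 1 ≤ T c d) : lowerAt T c d ⋖ T := by
  refine Pi.covBy_iff.2 ⟨c, Pi.covBy_iff.2 ⟨d, ?_, fun v hv => ?_⟩, fun u hu => ?_⟩
  · simp only [lowerAt, and_self, if_true, Nat.covBy_iff_add_one_eq]
    omega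
  · simp [lowerAt, hv]
  · funext v
    simp [lowerAt, hu]

lemma eq_of_lowerAt_eq {c' d' : ℕ} (h : 1 ≤ T c d)
    (heq : lowerAt T c d = lowerAt T c' d') : c = c' ∧ d = d' := by
  by_contra hne
  have := congrFun (congrFun heq c) d
  simp only [lowerAt, and_self, if_true] at this
  rw [if_neg (by tauto)] at this
  omega

lemma IsSSYTShape.exists_reducible_le_lowerAt (hS : IsSSYTShape lam S)
    (hT : IsSSYTShape lam T) (hST : S < T) :
    ∃ c d, Reducible T c d ∧ S ≤ lowerAt T c d := by
  obtain ⟨hle, u, hu⟩ := Pi.lt_def.1 hST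
  obtain ⟨v, huv⟩ := (Pi.lt_def.1 hu).2
  obtain ⟨⟨c, d⟩, hcd, hmin⟩ :=
    wellFounded_lt.has_min {p : ℕ × ℕ | S p.1 p.2 < T p.1 p.2} ⟨(u, v), huv⟩
  simp only [Set.mem_ofPred_eq] at hcd
  have hagree : ∀ x y, (x, y) < (c, d) → ExtT S x y = ExtT T x y := fun x y hxy => by
    simp only [ExtT, le_antisymm (hle x y) (not_lt.1 fun h => hmin (x, y) h hxy)]
  have hcell : CellOf lam c d := by
    by_contra hcell
    rw [hT.1 c d hcell] at hcd
    omega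
  have hrow := hS.2.1 c d hcell
  have hcol := hS.2.2 c d hcell
  obtain ⟨hc, hd, -⟩ := hcell
  rw [hagree c (d - 1) (Prod.mk_lt_mk_iff_right.2 (by omega))] at hrow
  rw [hagree (c - 1) d (Prod.mk_lt_mk_iff_left.2 (by omega))] at hcol
  rw [extT_of_pos hc hd] at hrow hcol
  refine ⟨c, d, ⟨?_, ?_⟩, fun x y => ?_⟩
  · rw [extT_of_pos hc hd]; omega
  · rw [extT_of_pos hc hd]; omega
  · have := hle x y
    simp only [lowerAt]
    split_ifs with hxy
    · obtain ⟨rfl, rfl⟩ := hxy; omega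
    · exact this

lemma IsSSYTShape.extT_eq_max_of_not_reducible (hT : IsSSYTShape lam T)
    (hcell : CellOf lam u v) (h : ¬ Reducible T u v) :
    ExtT T u v = max (ExtT T u (v - 1)) (ExtT T (u - 1) v + 1) := by
  have := hT.2.1 u v hcell
  have := hT.2.2 u v hcell
  simp only [Reducible] at h
  omega

lemma IsSSYTShape.ext_of_reducible (hS : IsSSYTShape lam S) (hT : IsSSYTShape lam T)
    (hred : ∀ u v, Reducible S u v ↔ Reducible T u v)
    (hval : ∀ u v, Reducible S u v → S u v = T u v) : S = T := by
  have hext : ∀ m x y, x + y = m → ExtT S x y = ExtT T x y := by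
    intro m
    induction m using Nat.strong_induction_on with
    | _ m ih =>
      rintro x y rfl
      by_cases hcell : CellOf lam x y
      · obtain ⟨hx, hy, -⟩ := id hcell
        by_cases hr : Reducible S x y
        · rw [extT_of_pos hx hy, extT_of_pos hx hy, hval x y hr]
        · rw [hS.extT_eq_max_of_not_reducible hcell hr,
            hT.extT_eq_max_of_not_reducible hcell ((hred x y).not.1 hr),
            ih _ (by omega) x (y - 1) rfl, ih _ (by omega) (x - 1) y rfl]
      · simp only [ExtT, hS.1 x y hcell, hT.1 x y hcell]
  funext x y
  by_cases hcell : CellOf lam x y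
  · obtain ⟨hx, hy, -⟩ := hcell
    rw [← extT_of_pos (T := S) hx hy, ← extT_of_pos (T := T) hx hy, hext _ x y rfl]
  · rw [hS.1 x y hcell, hT.1 x y hcell]

lemma IsSSYTShape.le_apply (hlam : Antitone lam) (hT : IsSSYTShape lam T)
    (hcell : CellOf lam u v) : u ≤ T u v := by
  induction u with
  | zero => exact absurd hcell.1 (by omega)
  | succ u ih =>
    have hcol := hT.2.2 (u + 1) v hcell
    obtain ⟨-, hv, hvl⟩ := hcell
    rw [extT_of_pos (u := u + 1) (by omega) hv, Nat.add_sub_cancel] at hcol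
    rcases Nat.eq_zero_or_pos u with rfl | hu
    · omega
    · have := ih ⟨hu, hv, hvl.trans (hlam (Nat.le_succ u))⟩
      rw [extT_of_pos hu hv] at hcol
      omega

lemma IsSSYTShape.lt_apply_of_reducible (hlam : Antitone lam) (hT : IsSSYTShape lam T)
    (h : Reducible T a b) : a < T a b := by
  obtain ⟨ha, hb, hbl⟩ := hT.cellOf_of_reducible h
  have hcol := h.2
  rw [extT_of_pos ha hb] at hcol
  rcases Nat.eq_or_lt_of_le ha with rfl | ha
  · omega
  · have := hT.le_apply hlam ⟨Nat.le_sub_one_of_lt ha, hb, hbl.trans (hlam (Nat.sub_le a 1))⟩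
    rw [extT_of_pos (by omega) hb] at hcol
    omega

end Tableau

section MinimalTableau

variable {lam : ℕ → ℕ} {a b k u v : ℕ}

lemma addT_minT_apply :
    AddT lam (minT lam) a b k u v =
      if CellOf lam u v then (if a ≤ u ∧ b ≤ v then u + k else u) else 0 := by
  unfold AddT minT
  split_ifs <;> first | rfl | omega | tauto

lemma isSSYTShape_addT_minT : IsSSYTShape lam (AddT lam (minT lam) a b k) := by
  refine ⟨fun u v hcell => ?_, fun u v hcell => ?_, fun u v hcell => ?_⟩
  · rw [addT_minT_apply, if_neg hcell]
  all_goals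
    obtain ⟨hu, hv, hvl⟩ := hcell
    simp only [ExtT, addT_minT_apply]
    split_ifs <;> simp -failIfUnchanged only [CellOf] at * <;> omega

lemma reducible_addT_minT_iff (hlam : Antitone lam) (hab : CellOf lam a b) (hk : 1 ≤ k) :
    Reducible (AddT lam (minT lam) a b k) u v ↔ u = a ∧ v = b := by
  constructor
  · intro h
    obtain ⟨hu, hv, hvl⟩ := isSSYTShape_addT_minT.cellOf_of_reducible h
    have hup : 2 ≤ u → CellOf lam (u - 1) v :=
      fun hu => ⟨by omega, hv, hvl.trans (hlam (Nat.sub_le u 1))⟩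
    simp only [Reducible, ExtT, addT_minT_apply] at h
    split_ifs at h <;> simp -failIfUnchanged only [CellOf] at * <;> omega
  · rintro ⟨rfl, rfl⟩
    obtain ⟨ha, hb, hbl⟩ := hab
    simp only [Reducible, ExtT, addT_minT_apply]
    split_ifs <;> simp -failIfUnchanged only [CellOf] at * <;> omega

lemma addT_minT_le_addT_minT_iff {a' b' k' : ℕ} (hab : CellOf lam a b) (hk : 1 ≤ k) :
    AddT lam (minT lam) a b k ≤ AddT lam (minT lam) a' b' k' ↔ a' ≤ a ∧ b' ≤ b ∧ k ≤ k' := by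
  constructor
  · intro h
    have := h a b
    simp only [addT_minT_apply, if_pos hab, le_refl, and_self, if_true] at this
    split_ifs at this <;> omega
  · rintro ⟨ha, hb, hk⟩ u v
    simp only [addT_minT_apply]
    split_ifs <;> omega

lemma IsSSYTShape.exists_eq_addT_minT (hlam : Antitone lam) {T : ℕ → ℕ → ℕ}
    (hT : IsSSYTShape lam T) (hred : ∀ u v, Reducible T u v ↔ u = a ∧ v = b) :
    CellOf lam a b ∧ ∃ k, 1 ≤ k ∧ T = AddT lam (minT lam) a b k := by
  have hab := hT.cellOf_of_reducible ((hred a b).2 ⟨rfl, rfl⟩)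
  have hk := hT.lt_apply_of_reducible hlam ((hred a b).2 ⟨rfl, rfl⟩)
  refine ⟨hab, T a b - a, by omega, hT.ext_of_reducible isSSYTShape_addT_minT ?_ ?_⟩
  · intro u v
    rw [hred, reducible_addT_minT_iff hlam hab (by omega)]
  · intro u v h
    obtain ⟨rfl, rfl⟩ := (hred u v).1 h
    rw [addT_minT_apply, if_pos hab, if_pos ⟨le_rfl, le_rfl⟩]
    omega

end MinimalTableau

section Staircase

variable {n a b c d k : ℕ} {S T : ℕ → ℕ → ℕ}

lemma staircase_antitone : Antitone (staircase n) :=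
  fun _ _ h => Nat.sub_le_sub_left h _

lemma MnMem.lowerAt_of_reducible (hT : MnMem n T) (h : Reducible T c d) : MnMem n (lowerAt T c d) :=
  ⟨hT.1.lowerAt_of_reducible h, fun u v => le_trans (by unfold lowerAt; split_ifs <;> omega) (hT.2 u v)⟩

lemma mnCovBy_iff (hT : MnMem n T) :
    MnCovBy n S T ↔ ∃ c d, Reducible T c d ∧ S = lowerAt T c d := by
  constructor
  · rintro ⟨hS, hST, hcov⟩
    obtain ⟨c, d, hred, hle⟩ := hS.1.exists_reducible_le_lowerAt hT.1 hST
    have hlt := (lowerAt_covBy (one_le_two.trans (hT.1.two_le_of_reducible hred))).lt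
    exact ⟨c, d, hred, hle.eq_of_not_lt fun h => hcov _ (hT.lowerAt_of_reducible hred) ⟨h, hlt⟩⟩
  · rintro ⟨c, d, hred, rfl⟩
    have hcov := lowerAt_covBy (one_le_two.trans (hT.1.two_le_of_reducible hred))
    exact ⟨hT.lowerAt_of_reducible hred, hcov.lt, fun U _ hU => hcov.2 hU.1 hU.2⟩

lemma mnJoinIrred_iff :
    MnJoinIrred n T ↔ MnMem n T ∧ ∃ a b, ∀ u v, Reducible T u v ↔ u = a ∧ v = b := by
  refine and_congr_right fun hT => ?_
  simp only [mnCovBy_iff hT]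
  constructor
  · rintro ⟨-, ⟨c, d, hcd, rfl⟩, huniq⟩
    refine ⟨c, d, fun u v => ⟨fun h => ?_, by rintro ⟨rfl, rfl⟩; exact hcd⟩⟩
    exact eq_of_lowerAt_eq (one_le_two.trans (hT.1.two_le_of_reducible h))
      (huniq _ ⟨u, v, h, rfl⟩)
  · rintro ⟨c, d, hred⟩
    refine ⟨lowerAt T c d, ⟨c, d, (hred c d).2 ⟨rfl, rfl⟩, rfl⟩, ?_⟩
    rintro _ ⟨u, v, h, rfl⟩
    obtain ⟨rfl, rfl⟩ := (hred u v).1 h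
    rfl

lemma mem_phiSet_iff : (a, b, k) ∈ PhiSet n ↔ CellOf (staircase n) a b ∧ 1 ≤ k ∧ k ≤ b := by
  simp only [PhiSet, CellOf, staircase, Set.mem_ofPred_eq]
  omega

lemma mnMem_addT_minT_iff (hab : CellOf (staircase n) a b) :
    MnMem n (AddT (staircase n) (minT (staircase n)) a b k) ↔ k ≤ b := by
  obtain ⟨ha, hb, hbl⟩ := hab
  simp only [staircase] at hbl
  refine ⟨fun hT => ?_, fun hkb => ⟨isSSYTShape_addT_minT, fun u v => ?_⟩⟩
  · have := hT.2 (n - 1 - b) b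
    rw [addT_minT_apply, if_pos ⟨by omega, hb, by simp only [staircase]; omega⟩,
      if_pos ⟨by omega, le_rfl⟩] at this
    omega
  · simp only [addT_minT_apply]
    split_ifs <;> simp -failIfUnchanged only [CellOf, staircase] at * <;> omega

end Staircase

theorem stmt5_general (n : ℕ) :
    Set.BijOn
      (fun x : ℕ × ℕ × ℕ => AddT (staircase n) (minT (staircase n)) x.1 x.2.1 x.2.2)
      (PhiSet n) {T | MnJoinIrred n T} ∧
    ∀ x ∈ PhiSet n, ∀ y ∈ PhiSet n,
      ((y.1 ≤ x.1 ∧ y.2.1 ≤ x.2.1 ∧ x.2.2 ≤ y.2.2) ↔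
        AddT (staircase n) (minT (staircase n)) x.1 x.2.1 x.2.2 ≤
          AddT (staircase n) (minT (staircase n)) y.1 y.2.1 y.2.2) := by
  have order : ∀ x ∈ PhiSet n, ∀ y ∈ PhiSet n,
      ((y.1 ≤ x.1 ∧ y.2.1 ≤ x.2.1 ∧ x.2.2 ≤ y.2.2) ↔
        AddT (staircase n) (minT (staircase n)) x.1 x.2.1 x.2.2 ≤
          AddT (staircase n) (minT (staircase n)) y.1 y.2.1 y.2.2) := by
    rintro ⟨a, b, k⟩ hx y -
    obtain ⟨hab, hk, -⟩ := mem_phiSet_iff.1 hx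
    exact (addT_minT_le_addT_minT_iff hab hk).symm
  refine ⟨⟨?_, fun x hx y hy h => ?_, ?_⟩, order⟩
  · rintro ⟨a, b, k⟩ hx
    obtain ⟨hab, hk, hkb⟩ := mem_phiSet_iff.1 hx
    exact mnJoinIrred_iff.2 ⟨(mnMem_addT_minT_iff hab).2 hkb,
      a, b, fun u v => reducible_addT_minT_iff staircase_antitone hab hk⟩
  · obtain ⟨ha, hb, hk⟩ := (order x hx y hy).2 h.le
    obtain ⟨ha', hb', hk'⟩ := (order y hy x hx).2 h.ge
    exact Prod.ext (le_antisymm ha' ha) (Prod.ext (le_antisymm hb' hb) (le_antisymm hk hk'))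
  · intro T hT
    obtain ⟨hT, a, b, hred⟩ := mnJoinIrred_iff.1 hT
    obtain ⟨hab, k, hk, rfl⟩ := hT.1.exists_eq_addT_minT staircase_antitone hred
    exact ⟨(a, b, k), mem_phiSet_iff.2 ⟨hab, hk, (mnMem_addT_minT_iff hab).1 hT⟩, rfl⟩

/-- For `n ≥ 2`, `ψ : (a,b,k) ↦ Add(T⁰_{n-1}; a,b,k)` is a poset isomorphism
from `Φ_n` (with `(a,b,k) ≤ (a',b',k')` iff `a ≥ a'`, `b ≥ b'`, `k ≤ k'`)
onto the poset `Q_n` of join-irreducibles of `M_n` (entrywise order). -/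
theorem stmt5 (n : ℕ) (hn : 2 ≤ n) :
    Set.BijOn
      (fun x : ℕ × ℕ × ℕ => AddT (staircase n) (minT (staircase n)) x.1 x.2.1 x.2.2)
      (PhiSet n) {T | MnJoinIrred n T} ∧
    ∀ x ∈ PhiSet n, ∀ y ∈ PhiSet n,
      ((y.1 ≤ x.1 ∧ y.2.1 ≤ x.2.1 ∧ x.2.2 ≤ y.2.2) ↔
        AddT (staircase n) (minT (staircase n)) x.1 x.2.1 x.2.2 ≤
          AddT (staircase n) (minT (staircase n)) y.1 y.2.1 y.2.2) :=
  stmt5_general n
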